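/- For m ≥ n+2, the map Hom(∂Δ^m, X) → Hom(∂Δ^m, Y) ×_{Hom(Λ^m_0, Y)} Hom(Λ^m_0, X) induced by Λ^m_0 ⊂ ∂Δ^m has a retraction when f : X → Y is a relative n-dimensional hypergroupoid, using that Λ^m_0 → ∂Δ^m is the pushout of ∂Δ^{m-1} → Δ^{m-1} along the 0-th face inclusion ∂Δ^{m-1} → Λ^m_0. -/

import Mathlib

open CategoryTheory Simplicial

def RelTarget {X Y A B : SSet} (f : X ⟶ Y) (i : A ⟶ B) : Type _ :=
  {p : (A ⟶ X) × (B ⟶ Y) // p.1 ≫ f = i ≫ p.2}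

def relMatch {X Y A B : SSet} (f : X ⟶ Y) (i : A ⟶ B) (g : B ⟶ X) : RelTarget f i :=
  ⟨(i ≫ g, g ≫ f), Category.assoc i g f⟩

/-- A relative `n`-dimensional hypergroupoid: a Kan fibration whose relative partial
matching maps are bijective in all levels `m > n`. -/
def IsRelHypergroupoid (n : ℕ) {X Y : SSet} (f : X ⟶ Y) : Prop :=
  (∀ (m : ℕ) (k : Fin (m + 1)),
      Function.Surjective (relMatch f (Λ[m, k].ι))) ∧
    ∀ (m : ℕ) (k : Fin (m + 1)), m > n →
      Function.Bijective (relMatch f (Λ[m, k].ι))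

/-- The inclusion `Λ[m, k] ⟶ ∂Δ[m]` of a horn into the boundary of the standard
simplex. -/
def hornToBoundary (m : ℕ) (k : Fin (m + 1)) : (Λ[m, k] : SSet) ⟶ ∂Δ[m] :=
  SSet.Subcomplex.homOfLE (fun j x hx hs => hx (by
    rw [Set.range_eq_univ.mpr hs, Set.univ_union]))

/-!
Since `∂Δ[m+1]` is the pushout of `Δ[m] ⟵ ∂Δ[m] ⟶ Λ[m+1, 0]` along the `0`-th face, a map
`g : ∂Δ[m+1] ⟶ X` is determined by its restriction to `Λ[m+1, 0]` and its `0`-th face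
`d₀ g : Δ[m] ⟶ X`. The restriction of `d₀ g` to `Λ[m, 0] ⊆ ∂Δ[m]` factors through `Λ[m+1, 0]`
and `d₀ g ≫ f = d₀ (g ≫ f)`, so for `m > n` bijectivity of the relative matching map of `Λ[m, 0]`
recovers `d₀ g`. Thus the relative matching map of `Λ[m+1, 0] ⊆ ∂Δ[m+1]` is injective; it has a
retraction because `Λ[m+1, 0]` has a vertex, so every point of the target yields a constant map
`∂Δ[m+1] ⟶ X`.
-/

theorem Function.Injective.hasLeftInverse_of_nonempty {α β : Sort*} {f : α → β}
    (hf : Function.Injective f) (h : β → Nonempty α) : Function.HasLeftInverse f :=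
  ⟨fun b => haveI := h b; Function.invFun f b,
    fun a => haveI := h (f a); Function.leftInverse_invFun hf a⟩

namespace SSet

lemma horn.ι_hornToBoundary {m : ℕ} (k j : Fin (m + 2)) (hj : j ≠ k) :
    horn.ι k j hj ≫ hornToBoundary (m + 1) k = boundary.ι j :=
  rfl

lemma range_boundary_ι_δ_le_horn (m : ℕ) (j : Fin (m + 2)) :
    Subcomplex.range (∂Δ[m].ι ≫ stdSimplex.δ j) ≤ Λ[m + 1, j] := by
  rintro ⟨⟨d⟩⟩ _ ⟨x, rfl⟩
  obtain ⟨i, hi⟩ := (mem_boundary_iff_notMem_range x.1).1 x.2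
  refine (mem_horn_iff_notMem_range _ j).2 ⟨j.succAbove i, Fin.succAbove_ne j i, ?_⟩
  rintro ⟨t, ht⟩
  exact hi ⟨t, Fin.succAbove_right_injective ht⟩

def boundary.δToHorn (m : ℕ) (j : Fin (m + 2)) : (∂Δ[m] : SSet) ⟶ Λ[m + 1, j] :=
  Subcomplex.lift _ (range_boundary_ι_δ_le_horn m j)

lemma horn_ι_boundary_ι_zero (m : ℕ) :
    Λ[m, 0].ι ≫ boundary.ι 0 =
      hornToBoundary m 0 ≫ boundary.δToHorn m 0 ≫ hornToBoundary (m + 1) 0 :=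
  rfl

end SSet

open SSet

lemma IsRelHypergroupoid.relMatch_hornToBoundary_injective {n : ℕ} {X Y : SSet} {f : X ⟶ Y}
    (hf : IsRelHypergroupoid n f) {m : ℕ} (hm : n < m) :
    Function.Injective (relMatch f (hornToBoundary (m + 1) 0)) := by
  intro g g' h
  have hΛ : hornToBoundary (m + 1) 0 ≫ g = hornToBoundary (m + 1) 0 ≫ g' :=
    congrArg (fun p => p.1.1) h
  have hY : g ≫ f = g' ≫ f := congrArg (fun p => p.1.2) h
  refine boundary.hom_ext fun j => ?_
  rcases eq_or_ne j 0 with rfl | hj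
  · refine (hf.2 m 0 hm).1 (Subtype.ext (Prod.ext ?_ ?_))
    · simp only [relMatch, ← Category.assoc, horn_ι_boundary_ι_zero]
      simp only [Category.assoc, hΛ]
    · simp only [relMatch, Category.assoc, hY]
  · rw [← horn.ι_hornToBoundary 0 j hj, Category.assoc, Category.assoc, hΛ]

/-- For `m ≥ n + 2` and `f : X → Y` a relative `n`-dimensional hypergroupoid, the map
`Hom(∂Δ^m, X) → Hom(∂Δ^m, Y) ×_{Hom(Λ^m_0, Y)} Hom(Λ^m_0, X)` induced by the inclusion
`Λ^m_0 ⊆ ∂Δ^m` has a retraction. -/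
theorem stmt7 (n : ℕ) {X Y : SSet} (f : X ⟶ Y) (hf : IsRelHypergroupoid n f)
    (m : ℕ) (hm : m ≥ n + 2) :
    ∃ r : RelTarget f (hornToBoundary m 0) → ((∂Δ[m] : SSet) ⟶ X),
      Function.LeftInverse r (relMatch f (hornToBoundary m 0)) := by
  obtain ⟨k, rfl⟩ : ∃ k, m = k + 2 := ⟨m - 2, by omega⟩
  exact (hf.relMatch_hornToBoundary_injective (m := k + 1) (by omega)).hasLeftInverse_of_nonempty
    fun p => ⟨SSet.const (p.1.1.app _ (horn.const k 0 0 _))⟩
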